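/- For every nonnegative integer N, the following identity holds in ℤ[q]: ∑_{π ∈ D_{≤N}} (−1)^{E(π)} q^{O(π)} = ∏_{i=0}^{⌈N/2⌉ − 1} (1 + q^{2i+1}), where the sum runs over the (finitely many) partitions into distinct parts all ≤ N. -/

import Mathlib

/-- Sum of `f` over the entries of a list at even 0-based positions, i.e. over the
odd-indexed parts `λ1, λ3, λ5, …` of a partition `(λ1, λ2, λ3, …)`. -/
def sumAlt (f : ℕ → ℕ) : List ℕ → ℕ
  | [] => 0
  | [a] => f a
  | a :: _ :: l => f a + sumAlt f l

/-- `O(π) = λ1 + λ3 + λ5 + ⋯`, the sum of the odd-indexed parts. -/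
def Osum (l : List ℕ) : ℕ := sumAlt id l

/-- `E(π) = λ2 + λ4 + λ6 + ⋯`, the sum of the even-indexed parts. -/
def Esum (l : List ℕ) : ℕ := sumAlt id l.tail

/-- `γ(π) = λ1 − λ2 + λ3 − λ4 + ⋯ = O(π) − E(π)`, the alternating sum of the parts.
For a weakly decreasing list we have `Osum l ≥ Esum l`, so natural subtraction is exact. -/
def gammaSum (l : List ℕ) : ℕ := Osum l - Esum l

/-- `⌈O⌉(π) = ∑ ⌈λ_{2i−1}/2⌉`. -/
def ceilO (l : List ℕ) : ℕ := sumAlt (fun a => (a + 1) / 2) l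

/-- `⌊O⌋(π) = ∑ ⌊λ_{2i−1}/2⌋`. -/
def floorO (l : List ℕ) : ℕ := sumAlt (fun a => a / 2) l

/-- `⌈E⌉(π) = ∑ ⌈λ_{2i}/2⌉`. -/
def ceilE (l : List ℕ) : ℕ := sumAlt (fun a => (a + 1) / 2) l.tail

/-- `⌊E⌋(π) = ∑ ⌊λ_{2i}/2⌋`. -/
def floorE (l : List ℕ) : ℕ := sumAlt (fun a => a / 2) l.tail

/-- A partition: a weakly decreasing finite list of positive integers. -/
def IsPartition (l : List ℕ) : Prop := l.Pairwise (· ≥ ·) ∧ ∀ x ∈ l, 0 < x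

/-- A partition into distinct parts: a strictly decreasing finite list of positive integers. -/
def IsDistinctPartition (l : List ℕ) : Prop := l.Pairwise (· > ·) ∧ ∀ x ∈ l, 0 < x

/-- The Gaussian binomial coefficient `[n choose k]_q` as a polynomial in `q`
(defined by the q-Pascal recurrence; it equals `(q;q)_n / ((q;q)_k (q;q)_{n−k})`). -/
noncomputable def qbinom : ℕ → ℕ → Polynomial ℤ
  | _, 0 => 1
  | 0, _ + 1 => 0
  | n + 1, k + 1 => qbinom n k + Polynomial.X ^ (k + 1) * qbinom n (k + 1)

/-!
Let `S N = ∑ (−1)^{E(π)} q^{O(π)}` and `T N = ∑ (−1)^{O(π)} q^{E(π)}` over `π ∈ D_{≤N}`.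
A partition in `D_{≤N+1}` either avoids `N + 1` or is `N + 1` prepended to a partition `π` of
`D_{≤N}`; prepending a part swaps the roles of `O` and `E`, so
`S (N+1) = S N + q^{N+1} T N` and `T (N+1) = T N + (−1)^{N+1} S N`.
Solving this recursion two steps at a time gives `S (2m) = T (2m) = ∏_{i<m} (1 + q^{2i+1})`,
`S (2m+1) = ∏_{i≤m} (1 + q^{2i+1})` and `T (2m+1) = 0`.
-/

open Polynomial Finset

lemma sumAlt_cons (f : ℕ → ℕ) (a : ℕ) (l : List ℕ) :
    sumAlt f (a :: l) = f a + sumAlt f l.tail := by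
  cases l <;> simp [sumAlt]

lemma Esum_cons (a : ℕ) (l : List ℕ) : Esum (a :: l) = Osum l := rfl

lemma Osum_cons (a : ℕ) (l : List ℕ) : Osum (a :: l) = a + Esum l :=
  sumAlt_cons id a l

def distinctPartsLE : ℕ → Finset (List ℕ)
  | 0 => {[]}
  | n + 1 => distinctPartsLE n ∪ (distinctPartsLE n).image (List.cons (n + 1))

lemma le_of_mem_distinctPartsLE {N : ℕ} {l : List ℕ} (hl : l ∈ distinctPartsLE N) :
    ∀ x ∈ l, x ≤ N := by
  induction N generalizing l with
  | zero => simp_all [distinctPartsLE]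
  | succ n ih =>
    simp only [distinctPartsLE, mem_union, mem_image] at hl
    rcases hl with hl | ⟨t, ht, rfl⟩
    · exact fun x hx => (ih hl x hx).trans n.le_succ
    · simpa using fun x hx => (ih ht x hx).trans n.le_succ

lemma sum_distinctPartsLE_succ {M : Type*} [AddCommMonoid M] (f : List ℕ → M) (n : ℕ) :
    ∑ l ∈ distinctPartsLE (n + 1), f l =
      ∑ l ∈ distinctPartsLE n, f l + ∑ l ∈ distinctPartsLE n, f ((n + 1) :: l) := by
  have hdisj : Disjoint (distinctPartsLE n) ((distinctPartsLE n).image (List.cons (n + 1))) := by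
    simp only [disjoint_left, mem_image, not_exists, not_and]
    rintro _ hl t - rfl
    have := le_of_mem_distinctPartsLE hl (n + 1) (by simp)
    omega
  rw [distinctPartsLE, sum_union hdisj, sum_image (by simp)]

lemma mem_distinctPartsLE {N : ℕ} {l : List ℕ} :
    l ∈ distinctPartsLE N ↔ IsDistinctPartition l ∧ ∀ x ∈ l, x ≤ N := by
  induction N generalizing l with
  | zero =>
    cases l with
    | nil => simp [distinctPartsLE, IsDistinctPartition]
    | cons a t => simp [distinctPartsLE, IsDistinctPartition]; omega
  | succ n ih =>
    simp only [distinctPartsLE, mem_union, mem_image, ih]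
    cases l with
    | nil => simp [IsDistinctPartition]
    | cons a t =>
      simp only [IsDistinctPartition, List.pairwise_cons, List.mem_cons, forall_eq_or_imp,
        List.cons.injEq]
      constructor
      · rintro (⟨⟨⟨hat, ht⟩, ha, htpos⟩, han, htn⟩ | ⟨t, ⟨⟨ht, htpos⟩, htn⟩, rfl, rfl⟩)
        · exact ⟨⟨⟨hat, ht⟩, ha, htpos⟩, by omega, fun x hx => (htn x hx).trans n.le_succ⟩
        · exact ⟨⟨⟨fun x hx => Nat.lt_succ_of_le (htn x hx), ht⟩, n.succ_pos, htpos⟩, le_rfl,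
            fun x hx => (htn x hx).trans n.le_succ⟩
      · rintro ⟨⟨⟨hat, ht⟩, ha, htpos⟩, han, htn⟩
        rcases han.lt_or_eq with han | rfl
        · exact Or.inl ⟨⟨⟨hat, ht⟩, ha, htpos⟩, by omega, fun x hx => by have := hat x hx; omega⟩
        · exact Or.inr ⟨t, ⟨⟨ht, htpos⟩, fun x hx => Nat.lt_succ_iff.1 (hat x hx)⟩, rfl, rfl⟩

section GeneratingFunctions

variable (R : Type*) [CommRing R]

noncomputable def signedOddSum (N : ℕ) : R[X] :=
  ∑ l ∈ distinctPartsLE N, (-1) ^ Esum l * X ^ Osum l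

noncomputable def signedEvenSum (N : ℕ) : R[X] :=
  ∑ l ∈ distinctPartsLE N, (-1) ^ Osum l * X ^ Esum l

noncomputable def oddFactorProd (m : ℕ) : R[X] :=
  ∏ i ∈ range m, (1 + X ^ (2 * i + 1))

lemma oddFactorProd_succ (m : ℕ) :
    oddFactorProd R (m + 1) = oddFactorProd R m * (1 + X ^ (2 * m + 1)) :=
  prod_range_succ _ m

lemma signedOddSum_succ (n : ℕ) :
    signedOddSum R (n + 1) = signedOddSum R n + X ^ (n + 1) * signedEvenSum R n := by
  rw [signedOddSum, signedOddSum, signedEvenSum, sum_distinctPartsLE_succ, mul_sum]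
  congr 1
  refine sum_congr rfl fun l _ => ?_
  rw [Esum_cons, Osum_cons, pow_add]
  ring

lemma signedEvenSum_succ (n : ℕ) :
    signedEvenSum R (n + 1) = signedEvenSum R n + (-1) ^ (n + 1) * signedOddSum R n := by
  rw [signedOddSum, signedEvenSum, signedEvenSum, sum_distinctPartsLE_succ, mul_sum]
  congr 1
  refine sum_congr rfl fun l _ => ?_
  rw [Esum_cons, Osum_cons, pow_add]
  ring

lemma signedSums_two_mul_add_one {m : ℕ} (hS : signedOddSum R (2 * m) = oddFactorProd R m)
    (hT : signedEvenSum R (2 * m) = oddFactorProd R m) :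
    signedOddSum R (2 * m + 1) = oddFactorProd R (m + 1) ∧ signedEvenSum R (2 * m + 1) = 0 := by
  rw [signedOddSum_succ, signedEvenSum_succ, hS, hT, oddFactorProd_succ,
    (odd_two_mul_add_one m).neg_one_pow]
  constructor <;> ring

lemma signedSums_two_mul (m : ℕ) :
    signedOddSum R (2 * m) = oddFactorProd R m ∧ signedEvenSum R (2 * m) = oddFactorProd R m := by
  induction m with
  | zero => simp [signedOddSum, signedEvenSum, oddFactorProd, distinctPartsLE, Esum, Osum, sumAlt]
  | succ m ih =>
    obtain ⟨hS, hT⟩ := signedSums_two_mul_add_one R ih.1 ih.2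
    rw [show 2 * (m + 1) = 2 * m + 1 + 1 by ring, signedOddSum_succ R (2 * m + 1),
      signedEvenSum_succ R (2 * m + 1), hS, hT,
      Even.neg_one_pow ⟨m + 1, by ring⟩]
    constructor <;> ring

lemma signedOddSum_eq (N : ℕ) : signedOddSum R N = oddFactorProd R ((N + 1) / 2) := by
  obtain ⟨m, rfl | rfl⟩ := Nat.even_or_odd' N
  · rw [show (2 * m + 1) / 2 = m by omega]
    exact (signedSums_two_mul R m).1
  · obtain ⟨hS, hT⟩ := signedSums_two_mul R m
    rw [show (2 * m + 1 + 1) / 2 = m + 1 by omega]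
    exact (signedSums_two_mul_add_one R hS hT).1

end GeneratingFunctions

/-- In `ℤ[q]`:
`∑_{π ∈ D_{≤N}} (−1)^{E(π)} q^{O(π)} = ∏_{i=0}^{⌈N/2⌉−1} (1 + q^{2i+1})`. -/
theorem finite_signed_schmidt (N : ℕ) :
    ∑ᶠ l ∈ {l : List ℕ | IsDistinctPartition l ∧ ∀ x ∈ l, x ≤ N},
      ((-1 : Polynomial ℤ)) ^ Esum l * Polynomial.X ^ Osum l
    = ∏ i ∈ Finset.range ((N + 1) / 2), (1 + Polynomial.X ^ (2 * i + 1)) := by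
  have hset : {l : List ℕ | IsDistinctPartition l ∧ ∀ x ∈ l, x ≤ N} = ↑(distinctPartsLE N) :=
    Set.ext fun _ => mem_distinctPartsLE.symm
  rw [hset, finsum_mem_coe_finset]
  exact signedOddSum_eq ℤ N
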